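/- arXiv:solv-int/9808009 — 3 statements merged into one kernel-verified Lean document; each statement's English description precedes it below -/
import Mathlib

section
/- Let A, B, C be nonzero complex numbers, let h, V₁, V₂, V₃, w₁, w₂, w₃ be complex numbers satisfying w₂² − B⁻¹ = w₁² − A⁻¹ and w₃² − C⁻¹ = w₁² − A⁻¹, and set 𝒱 = 1 + (h/(2i))·(V₁w₁σ₁ + V₂w₂σ₂ + V₃w₃σ₃). Then det 𝒱 = 1 + (h²/4)·(v²·w₁² + F − A⁻¹·v²), where v² = V₁² + V₂² + V₃² and F = V₁²/A + V₂²/B + V₃²/C. Consequently, if h ≠ 0 and v² ≠ 0, then det 𝒱 = 0 if and only if w₁² = v⁻²·(−4/h² + A⁻¹·v² − F). -/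
open Matrix

/-- The complex 2×2 Pauli matrices. -/
noncomputable def σ₁ : Matrix (Fin 2) (Fin 2) ℂ := !![0, 1; 1, 0]
noncomputable def σ₂ : Matrix (Fin 2) (Fin 2) ℂ := !![0, -Complex.I; Complex.I, 0]
noncomputable def σ₃ : Matrix (Fin 2) (Fin 2) ℂ := !![1, 0; 0, -1]

theorem det_one_add_smul_pauli (c x y z : ℂ) :
    ((1 : Matrix (Fin 2) (Fin 2) ℂ) + c • (x • σ₁ + y • σ₂ + z • σ₃)).det =
      1 - c ^ 2 * (x ^ 2 + y ^ 2 + z ^ 2) := by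
  simp only [one_fin_two, σ₁, σ₂, σ₃, smul_of, smul_cons, smul_eq_mul, mul_zero, mul_one,
    smul_empty, mul_neg, of_add_of, add_cons, head_cons, add_zero, tail_cons, empty_add_empty,
    zero_add, det_fin_two, of_apply, cons_val', cons_val_zero, cons_val_fin_one, cons_val_one]
  linear_combination c ^ 2 * y ^ 2 * Complex.I_sq

theorem div_two_I_sq (h : ℂ) : (h / (2 * Complex.I)) ^ 2 = -(h ^ 2 / 4) := by
  rw [div_pow, mul_pow, Complex.I_sq]
  ring

theorem one_add_sq_div_four_mul_eq_zero_iff {K : Type*} [Field K] [CharZero K] {k v w a F : K}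
    (hk : k ≠ 0) (hv : v ≠ 0) :
    1 + (k ^ 2 / 4) * (v * w + F - a * v) = 0 ↔ w = v⁻¹ * (-4 / k ^ 2 + a * v - F) := by
  have hk2 : k ^ 2 ≠ 0 := pow_ne_zero 2 hk
  rw [eq_inv_mul_iff_mul_eq₀ hv]
  constructor <;> intro h
  · field_simp
    linear_combination 4 * h
  · rw [h]
    field_simp
    ring

theorem stmt_6_general (A B C h V₁ V₂ V₃ w₁ w₂ w₃ : ℂ)
    (h2 : w₂ ^ 2 - B⁻¹ = w₁ ^ 2 - A⁻¹)
    (h3 : w₃ ^ 2 - C⁻¹ = w₁ ^ 2 - A⁻¹)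
    (𝒱 : Matrix (Fin 2) (Fin 2) ℂ)
    (h𝒱 : 𝒱 = (1 : Matrix (Fin 2) (Fin 2) ℂ) +
      (h / (2 * Complex.I)) • ((V₁ * w₁) • σ₁ + (V₂ * w₂) • σ₂ + (V₃ * w₃) • σ₃))
    (vsq F : ℂ)
    (hvsq : vsq = V₁ ^ 2 + V₂ ^ 2 + V₃ ^ 2)
    (hF : F = V₁ ^ 2 / A + V₂ ^ 2 / B + V₃ ^ 2 / C) :
    𝒱.det = 1 + (h ^ 2 / 4) * (vsq * w₁ ^ 2 + F - A⁻¹ * vsq) ∧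
    (h ≠ 0 → vsq ≠ 0 →
      (𝒱.det = 0 ↔ w₁ ^ 2 = vsq⁻¹ * (-4 / h ^ 2 + A⁻¹ * vsq - F))) := by
  have hdet : 𝒱.det = 1 + (h ^ 2 / 4) * (vsq * w₁ ^ 2 + F - A⁻¹ * vsq) := by
    rw [h𝒱, det_one_add_smul_pauli, div_two_I_sq, hvsq, hF]
    linear_combination (h ^ 2 / 4 * V₂ ^ 2) * h2 + (h ^ 2 / 4 * V₃ ^ 2) * h3
  exact ⟨hdet, fun hh hv => hdet ▸ one_add_sq_div_four_mul_eq_zero_iff hh hv⟩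

/-- Equation (43): det 𝒱 = 1 + (h²/4)(v²w₁² + F − A⁻¹v²) for
𝒱 = 1 + (h/2i)(V₁w₁σ₁ + V₂w₂σ₂ + V₃w₃σ₃), and for h ≠ 0, v² ≠ 0 one has
det 𝒱 = 0 iff w₁² = v⁻²(−4/h² + A⁻¹v² − F). -/
theorem stmt_6 (A B C h V₁ V₂ V₃ w₁ w₂ w₃ : ℂ)
    (hA : A ≠ 0) (hB : B ≠ 0) (hC : C ≠ 0)
    (h2 : w₂ ^ 2 - B⁻¹ = w₁ ^ 2 - A⁻¹)
    (h3 : w₃ ^ 2 - C⁻¹ = w₁ ^ 2 - A⁻¹)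
    (𝒱 : Matrix (Fin 2) (Fin 2) ℂ)
    (h𝒱 : 𝒱 = (1 : Matrix (Fin 2) (Fin 2) ℂ) +
      (h / (2 * Complex.I)) • ((V₁ * w₁) • σ₁ + (V₂ * w₂) • σ₂ + (V₃ * w₃) • σ₃))
    (vsq F : ℂ)
    (hvsq : vsq = V₁ ^ 2 + V₂ ^ 2 + V₃ ^ 2)
    (hF : F = V₁ ^ 2 / A + V₂ ^ 2 / B + V₃ ^ 2 / C) :
    𝒱.det = 1 + (h ^ 2 / 4) * (vsq * w₁ ^ 2 + F - A⁻¹ * vsq) ∧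
    (h ≠ 0 → vsq ≠ 0 →
      (𝒱.det = 0 ↔ w₁ ^ 2 = vsq⁻¹ * (-4 / h ^ 2 + A⁻¹ * vsq - F))) :=
  stmt_6_general A B C h V₁ V₂ V₃ w₁ w₂ w₃ h2 h3 𝒱 h𝒱 vsq F hvsq hF
end

section
/- Let A, B, C be positive real numbers, let γ and h be real numbers, and let M, M̂ ∈ ℝ³ satisfy the discrete Euler equation M̂ − M = (γh/4)·((M + M̂) × I⁻¹(M + M̂)), where I⁻¹(v) = (v₁/A, v₂/B, v₃/C) and × is the cross product on ℝ³. Then ‖M̂‖ = ‖M‖. -/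
/-- The inverse inertia tensor I⁻¹ = diag(A,B,C)⁻¹ acting on a vector. -/
noncomputable def inertiaInv (A B C : ℝ) (v : Fin 3 → ℝ) : Fin 3 → ℝ :=
  ![v 0 / A, v 1 / B, v 2 / C]

/-- A cross product with `x + y` is orthogonal to `x + y`, and `⟪y + x, y - x⟫ = ‖y‖² - ‖x‖²`. -/
theorem EuclideanSpace.norm_eq_of_sub_eq_smul_cross {x y : EuclideanSpace ℝ (Fin 3)}
    (c : ℝ) (w : Fin 3 → ℝ)
    (h : ∀ i, y i - x i = c * crossProduct (fun j => x j + y j) w i) :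
    ‖y‖ = ‖x‖ := by
  have hsub : WithLp.ofLp (y - x) = c • crossProduct (fun j => x j + y j) w := funext h
  have hadd : WithLp.ofLp (y + x) = fun j => x j + y j := funext fun j => add_comm (y j) (x j)
  rw [← real_inner_add_sub_eq_zero_iff, EuclideanSpace.inner_eq_star_dotProduct, star_trivial,
    hsub, hadd, smul_dotProduct, dotProduct_comm, dot_self_cross, smul_zero]

theorem stmt_13_general (A B C γ h : ℝ)
    (M Mhat : EuclideanSpace ℝ (Fin 3))
    (hEuler : ∀ i : Fin 3, Mhat i - M i =
      (γ * h / 4) * crossProduct (fun j => M j + Mhat j)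
        (inertiaInv A B C (fun j => M j + Mhat j)) i) :
    ‖Mhat‖ = ‖M‖ :=
  EuclideanSpace.norm_eq_of_sub_eq_smul_cross _ _ hEuler

/-- The discrete Euler equation M̂ − M = (γh/4)(M + M̂) × I⁻¹(M + M̂) preserves the
Euclidean norm of the angular momentum: ‖M̂‖ = ‖M‖. -/
theorem stmt_13 (A B C γ h : ℝ) (hA : 0 < A) (hB : 0 < B) (hC : 0 < C)
    (M Mhat : EuclideanSpace ℝ (Fin 3))
    (hEuler : ∀ i : Fin 3, Mhat i - M i =
      (γ * h / 4) * crossProduct (fun j => M j + Mhat j)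
        (inertiaInv A B C (fun j => M j + Mhat j)) i) :
    ‖Mhat‖ = ‖M‖ :=
  stmt_13_general A B C γ h M Mhat hEuler
end

section
/- Let A, B, C be positive real numbers, let γ and h be real numbers, and let M, M̂ ∈ ℝ³ satisfy the discrete Euler equation M̂ − M = (γh/4)·((M + M̂) × I⁻¹(M + M̂)), where I⁻¹(v) = (v₁/A, v₂/B, v₃/C) and × is the cross product on ℝ³. Then M̂₁²/A + M̂₂²/B + M̂₃²/C = M₁²/A + M₂²/B + M₃²/C. -/
open Matrix

namespace Matrix

variable {n R : Type*} [Fintype n] [CommRing R] {S : Matrix n n R}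

theorem IsSymm.dotProduct_mulVec_comm (hS : S.IsSymm) (x y : n → R) :
    x ⬝ᵥ S *ᵥ y = y ⬝ᵥ S *ᵥ x := by
  rw [dotProduct_mulVec, ← mulVec_transpose, hS.eq, dotProduct_comm]

theorem IsSymm.dotProduct_mulVec_self_sub (hS : S.IsSymm) (x y : n → R) :
    x ⬝ᵥ S *ᵥ x - y ⬝ᵥ S *ᵥ y = (x - y) ⬝ᵥ S *ᵥ (x + y) := by
  rw [mulVec_add, dotProduct_add, sub_dotProduct, sub_dotProduct, hS.dotProduct_mulVec_comm x y]
  ring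

end Matrix

theorem dotProduct_mulVec_self_eq_of_sub_eq_smul_cross {R : Type*} [CommRing R]
    {S : Matrix (Fin 3) (Fin 3) R} (hS : S.IsSymm) {c : R} {x y : Fin 3 → R}
    (h : y - x = c • (x + y) ⨯₃ (S *ᵥ (x + y))) :
    y ⬝ᵥ S *ᵥ y = x ⬝ᵥ S *ᵥ x := by
  rw [← sub_eq_zero, hS.dotProduct_mulVec_self_sub, add_comm y, h, smul_dotProduct,
    dotProduct_comm, dot_cross_self, smul_zero]

theorem inertiaInv_eq_diagonal_mulVec (A B C : ℝ) (v : Fin 3 → ℝ) :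
    inertiaInv A B C v = diagonal ![A⁻¹, B⁻¹, C⁻¹] *ᵥ v := by
  ext i
  fin_cases i <;> simp [inertiaInv, mulVec_diagonal, div_eq_inv_mul]

theorem dotProduct_inertiaInv_self (A B C : ℝ) (v : Fin 3 → ℝ) :
    v ⬝ᵥ inertiaInv A B C v = v 0 ^ 2 / A + v 1 ^ 2 / B + v 2 ^ 2 / C := by
  simp only [inertiaInv, vec3_dotProduct, cons_val]
  ring

theorem stmt_14_general (A B C γ h : ℝ)
    (M Mhat : Fin 3 → ℝ)
    (hEuler : Mhat - M = (γ * h / 4) • crossProduct (M + Mhat)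
        (inertiaInv A B C (M + Mhat))) :
    Mhat 0 ^ 2 / A + Mhat 1 ^ 2 / B + Mhat 2 ^ 2 / C
      = M 0 ^ 2 / A + M 1 ^ 2 / B + M 2 ^ 2 / C := by
  simp only [← dotProduct_inertiaInv_self, inertiaInv_eq_diagonal_mulVec] at hEuler ⊢
  exact dotProduct_mulVec_self_eq_of_sub_eq_smul_cross (isSymm_diagonal _) hEuler

/-- The discrete Euler equation M̂ − M = (γh/4)(M + M̂) × I⁻¹(M + M̂) preserves the
energy: M̂₁²/A + M̂₂²/B + M̂₃²/C = M₁²/A + M₂²/B + M₃²/C. -/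
theorem stmt_14 (A B C γ h : ℝ) (hA : 0 < A) (hB : 0 < B) (hC : 0 < C)
    (M Mhat : Fin 3 → ℝ)
    (hEuler : Mhat - M = (γ * h / 4) • crossProduct (M + Mhat)
        (inertiaInv A B C (M + Mhat))) :
    Mhat 0 ^ 2 / A + Mhat 1 ^ 2 / B + Mhat 2 ^ 2 / C
      = M 0 ^ 2 / A + M 1 ^ 2 / B + M 2 ^ 2 / C :=
  stmt_14_general A B C γ h M Mhat hEuler
end
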